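/- arXiv:1512.08551 — 3 statements merged into one kernel-verified Lean document; each statement's English description precedes it below -/
import Mathlib

section
/- For the Dunkl operator y = τ∂ − (1/x) Σ_i m k_i ε_i in D(x,∂)*Γ, one has the commutation relation x·y − y·x = Σ_{i=0}^{m-1} λ_i ε_i, where λ_i = m(k_{i-1} − k_i) − τ (indices mod m). -/
/-- The idempotent `ε_i = (1/m) ∑_{r=0}^{m-1} μ^{-ir} s^r` realised inside a `ℂ`-algebra. -/
noncomputable def epsA {A : Type*} [Ring A] [Algebra ℂ A]
    (m : ℕ) (μ : ℂ) (s : A) (i : ZMod m) : A :=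
  (m : ℂ)⁻¹ • ∑ r ∈ Finset.range m, (μ⁻¹ ^ (i.val * r)) • s ^ r

/-- The Dunkl operator `y = τ∂ − x⁻¹ ∑_i m·k_i·ε_i`. -/
noncomputable def dunklA {A : Type*} [Ring A] [Algebra ℂ A] (m : ℕ) [NeZero m]
    (μ τ : ℂ) (k : ZMod m → ℂ) (s d xinv : A) : A :=
  τ • d - xinv * ∑ i : ZMod m, ((m : ℂ) * k i) • epsA m μ s i

/-!
Since `s x = μ⁻¹ x s`, each idempotent satisfies `ε_i x = x ε_{i+1}`, so conjugating
`∑ c_i ε_i` by `x` shifts the coefficients: `x⁻¹ (∑ c_i ε_i) x = ∑ c_{i-1} ε_i`.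
Together with `[x, ∂] = -1` and `∑ ε_i = 1` (orthogonality of the powers of `μ`),
expanding `x y - y x` gives the claim.
-/

open Finset

theorem pow_mul_eq_smul_mul_pow {R A : Type*} [CommSemiring R] [Semiring A] [Algebra R A]
    {c : R} {s x : A} (h : s * x = c • (x * s)) (r : ℕ) :
    s ^ r * x = c ^ r • (x * s ^ r) := by
  induction r with
  | zero => simp
  | succ n ih =>
    rw [pow_succ, mul_assoc, h, mul_smul_comm, ← mul_assoc, ih, smul_mul_assoc, smul_smul,
      mul_assoc, ← pow_succ, ← pow_succ']

theorem ZMod.sum_val_eq_sum_range {M : Type*} [AddCommMonoid M] (m : ℕ) [NeZero m]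
    (f : ℕ → M) : ∑ i : ZMod m, f i.val = ∑ j ∈ range m, f j :=
  sum_nbij' ZMod.val (↑) (fun i _ => mem_range.mpr (ZMod.val_lt i)) (fun _ _ => mem_univ _)
    (fun i _ => ZMod.natCast_zmod_val i) (fun _ hj => ZMod.val_cast_of_lt (mem_range.mp hj))
    (fun _ _ => rfl)

theorem geom_sum_eq_zero_of_pow_eq_one {R : Type*} [CommRing R] [IsDomain R] {ζ : R} {m : ℕ}
    (hζ : ζ ^ m = 1) (hζ1 : ζ ≠ 1) : ∑ j ∈ range m, ζ ^ j = 0 := by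
  have h := geom_sum_mul ζ m
  rw [hζ, sub_self] at h
  exact (mul_eq_zero.mp h).resolve_right (sub_ne_zero.mpr hζ1)

theorem IsPrimitiveRoot.sum_zmod_pow_val_mul {R : Type*} [CommRing R] [IsDomain R] {ζ : R}
    {m : ℕ} [NeZero m] (hζ : IsPrimitiveRoot ζ m) {r : ℕ} (hr : r < m) :
    ∑ i : ZMod m, ζ ^ (i.val * r) = if r = 0 then (m : R) else 0 := by
  simp_rw [mul_comm _ r, pow_mul]
  rw [ZMod.sum_val_eq_sum_range m ((ζ ^ r) ^ ·)]
  split_ifs with hr0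
  · simp [hr0]
  · refine geom_sum_eq_zero_of_pow_eq_one ?_ (hζ.pow_ne_one_of_pos_of_lt hr0 hr)
    rw [← pow_mul, mul_comm, pow_mul, hζ.pow_eq_one, one_pow]

section

variable {A : Type*} [Ring A] [Algebra ℂ A] {m : ℕ} [NeZero m] {μ : ℂ}

theorem sum_epsA (hμ : IsPrimitiveRoot μ m) (s : A) : ∑ i : ZMod m, epsA m μ s i = 1 := by
  simp_rw [epsA, ← smul_sum]
  rw [sum_comm]
  simp_rw [← sum_smul]
  rw [sum_congr rfl fun r hr => by rw [hμ.inv.sum_zmod_pow_val_mul (mem_range.mp hr)]]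
  simp [NeZero.ne m]

theorem epsA_mul (hμ : IsPrimitiveRoot μ m) {s x : A} (hsx : s * x = μ⁻¹ • (x * s))
    (i : ZMod m) : epsA m μ s i * x = x * epsA m μ s (i + 1) := by
  simp only [epsA, smul_mul_assoc, mul_smul_comm, sum_mul, mul_sum]
  refine congrArg _ (sum_congr rfl fun r _ => ?_)
  rw [pow_mul_eq_smul_mul_pow hsx, smul_smul, ← pow_add]
  congr 1
  -- the exponents `i r + r` and `(i + 1) r` agree modulo `m = orderOf μ⁻¹`
  refine ((hμ.inv.isOfFinOrder (NeZero.ne m)).pow_eq_pow_iff_modEq).mpr ?_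
  rw [← hμ.inv.eq_orderOf, ← ZMod.natCast_eq_natCast_iff]
  push_cast
  rw [ZMod.natCast_zmod_val, ZMod.natCast_zmod_val]
  ring

theorem sum_smul_epsA_mul (hμ : IsPrimitiveRoot μ m) {s x : A} (hsx : s * x = μ⁻¹ • (x * s))
    (c : ZMod m → ℂ) :
    (∑ i : ZMod m, c i • epsA m μ s i) * x = x * ∑ i : ZMod m, c (i - 1) • epsA m μ s i := by
  simp only [sum_mul, mul_sum, smul_mul_assoc, epsA_mul hμ hsx, mul_smul_comm]
  exact Fintype.sum_equiv (Equiv.addRight 1) _ _ fun i => by simp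

end

theorem stmt3_general (m : ℕ) [NeZero m] (μ τ : ℂ) (hμ : IsPrimitiveRoot μ m) (k : ZMod m → ℂ)
    (A : Type*) [Ring A] [Algebra ℂ A] (s x d xinv : A)
    (hsx : s * x = μ⁻¹ • (x * s))
    (hdx : d * x = x * d + 1)
    (hx : x * xinv = 1) (hx' : xinv * x = 1) :
    x * dunklA m μ τ k s d xinv - dunklA m μ τ k s d xinv * x
      = ∑ i : ZMod m, ((m : ℂ) * (k (i - 1) - k i) - τ) • epsA m μ s i := by
  rw [dunklA, mul_sub, sub_mul, mul_smul_comm, smul_mul_assoc, ← mul_assoc x xinv, hx, one_mul,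
    mul_assoc xinv, sum_smul_epsA_mul hμ hsx, ← mul_assoc, hx', one_mul, hdx]
  simp only [sub_smul, mul_sub, sum_sub_distrib, ← smul_sum, sum_epsA hμ s, smul_add]
  -- stops `abel` from normalizing the index `i - 1`
  generalize ∑ i : ZMod m, ((m : ℂ) * k (i - 1)) • epsA m μ s i = Q
  abel

/-- In the crossed product `D(x,∂)*Γ` (presented by `s^m = 1`, `s x = μ⁻¹ x s`,
`∂ x = x ∂ + 1`, `x` invertible), the Dunkl operator `y` satisfies
`x·y − y·x = ∑_i λ_i ε_i` with `λ_i = m(k_{i-1} − k_i) − τ` (indices mod `m`). -/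
theorem stmt3 (m : ℕ) [NeZero m] (μ τ : ℂ) (hμ : IsPrimitiveRoot μ m) (k : ZMod m → ℂ)
    (A : Type*) [Ring A] [Algebra ℂ A] (s x d xinv : A)
    (hsm : s ^ m = 1)
    (hsx : s * x = μ⁻¹ • (x * s))
    (hsd : s * d = μ • (d * s))
    (hdx : d * x = x * d + 1)
    (hx : x * xinv = 1) (hx' : xinv * x = 1) :
    x * dunklA m μ τ k s d xinv - dunklA m μ τ k s d xinv * x
      = ∑ i : ZMod m, ((m : ℂ) * (k (i - 1) - k i) - τ) • epsA m μ s i :=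
  stmt3_general m μ τ hμ k A s x d xinv hsx hdx hx hx'
end

section
/- In the crossed product of polynomials with Γ, for the Dunkl operator y one has y·f = θ^{-1}(f)·y + D(f) for all f ∈ C[x]*Γ, where θ is the algebra automorphism with θ(s)=μs, θ(x)=x, and D(f) = τ∂(f) − Σ_{γ≠e} c_γ x^{-1}[γ, f]. -/
/-- In the crossed product `D(x,∂)*Γ`, for every `f` in the subalgebra `ℂ[x]*Γ`
(generated by `x` and `s`) one has `y·f = θ⁻¹(f)·y + D(f)`, where `θ` is the algebra
automorphism with `θ(s) = μs`, `θ(x) = x`, the coefficientwise derivative `∂` (written `pd`)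
is a `θ⁻¹`-twisted derivation with `∂x = 1`, `∂s = 0`, the coefficients are
`c_{s^j} = ∑_i μ^{-ij} k_i`, and `D(f) = τ·∂f − ∑_{γ ≠ e} c_γ x⁻¹(γf − fγ)`. -/
theorem stmt6 (m : ℕ) [NeZero m] (μ τ : ℂ) (hμ : IsPrimitiveRoot μ m) (k : ZMod m → ℂ)
    (A : Type*) [Ring A] [Algebra ℂ A] (s x d xinv : A)
    (θ : A ≃ₐ[ℂ] A) (pd : A →ₗ[ℂ] A)
    (hsm : s ^ m = 1)
    (hsx : s * x = μ⁻¹ • (x * s))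
    (hsd : s * d = μ • (d * s))
    (hdx : d * x = x * d + 1)
    (hx : x * xinv = 1) (hx' : xinv * x = 1)
    (hθx : θ x = x) (hθs : θ s = μ • s)
    (hpdmul : ∀ a b : A, pd (a * b) = pd a * b + θ.symm a * pd b)
    (hpdx : pd x = 1) (hpds : pd s = 0)
    (hd : ∀ f ∈ Algebra.adjoin ℂ ({x, s} : Set A), d * f = θ.symm f * d + pd f) :
    ∀ f ∈ Algebra.adjoin ℂ ({x, s} : Set A),
      dunklA m μ τ k s d xinv * f
        = θ.symm f * dunklA m μ τ k s d xinv
          + (τ • pd f - ∑ j ∈ Finset.Ico 1 m,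
              (∑ i : ZMod m, μ⁻¹ ^ (i.val * j) * k i) •
                (xinv * (s ^ j * f - f * s ^ j))) := by
  have hm : (m : ℂ) ≠ 0 := Nat.cast_ne_zero.mpr (NeZero.ne m)
  have hμ0 : μ ≠ 0 := by
    intro h
    have := hμ.pow_eq_one
    rw [h, zero_pow (NeZero.ne m)] at this
    exact zero_ne_one this
  have hθsx : θ.symm x = x := by
    apply θ.injective; rw [AlgEquiv.apply_symm_apply, hθx]
  have hθss : θ.symm s = μ⁻¹ • s := by
    apply θ.injective
    rw [AlgEquiv.apply_symm_apply, map_smul, hθs, smul_smul, inv_mul_cancel₀ hμ0, one_smul]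
  have hxs : xinv * x = θ.symm x * xinv := by
    rw [hθsx, hx']; exact hx.symm
  have hss : xinv * s = θ.symm s * xinv := by
    rw [hθss]
    calc xinv * s = xinv * s * (x * xinv) := by rw [hx, mul_one]
      _ = xinv * (s * x) * xinv := by noncomm_ring
      _ = xinv * (μ⁻¹ • (x * s)) * xinv := by rw [hsx]
      _ = μ⁻¹ • (xinv * x * (s * xinv)) := by
          simp only [mul_smul_comm, smul_mul_assoc, mul_assoc]
      _ = (μ⁻¹ • s) * xinv := by rw [hx', one_mul, smul_mul_assoc]
  -- key commutation lemma
  have key : ∀ f ∈ Algebra.adjoin ℂ ({x, s} : Set A), xinv * f = θ.symm f * xinv := by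
    intro f hf
    induction hf using Algebra.adjoin_induction with
    | mem a ha =>
      rcases ha with rfl | rfl
      · exact hxs
      · exact hss
    | algebraMap r => rw [AlgEquiv.commutes, Algebra.commutes]
    | add a b _ _ ha hb => rw [map_add, mul_add, add_mul, ha, hb]
    | mul a b _ _ ha hb =>
      rw [map_mul, ← mul_assoc, ha, mul_assoc, hb, ← mul_assoc]
  set c : ℕ → ℂ := fun r => ∑ i : ZMod m, μ⁻¹ ^ (i.val * r) * k i with hc
  have hE : (∑ i : ZMod m, ((m : ℂ) * k i) • epsA m μ s i)
      = ∑ r ∈ Finset.range m, c r • s ^ r := by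
    simp only [epsA, Finset.smul_sum, smul_smul]
    rw [Finset.sum_comm]
    refine Finset.sum_congr rfl fun r _ => ?_
    simp only [hc]
    rw [Finset.sum_smul]
    refine Finset.sum_congr rfl fun i _ => ?_
    congr 1
    field_simp
  intro f hf
  rw [dunklA, hE]
  set E := ∑ r ∈ Finset.range m, c r • s ^ r with hEdef
  have hS : (∑ j ∈ Finset.Ico 1 m, c j • (xinv * (s ^ j * f - f * s ^ j)))
      = ∑ j ∈ Finset.range m, c j • (xinv * (s ^ j * f - f * s ^ j)) := by
    apply Finset.sum_subset
    · intro j hj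
      rw [Finset.mem_Ico] at hj
      exact Finset.mem_range.mpr hj.2
    · intro j hj hj'
      rw [Finset.mem_range] at hj
      rw [Finset.mem_Ico] at hj'
      have : j = 0 := by omega
      subst this
      simp
  rw [hS]
  have hkey2 : xinv * E * f - θ.symm f * (xinv * E)
      = ∑ j ∈ Finset.range m, c j • (xinv * (s ^ j * f - f * s ^ j)) := by
    rw [← mul_assoc, ← key f hf, hEdef]
    simp only [Finset.mul_sum, Finset.sum_mul, smul_mul_assoc, mul_smul_comm, mul_assoc]
    rw [← Finset.sum_sub_distrib]
    refine Finset.sum_congr rfl fun r _ => ?_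
    rw [← smul_sub, ← mul_sub]
  simp only [sub_mul, smul_mul_assoc]
  rw [hd f hf, ← hkey2]
  simp only [smul_add, mul_sub, mul_smul_comm]
  abel
end

section
/- Consider the Hamiltonian flow on quadruples (X, Y, v, w) (X, Y ∈ End(V), V = ⊕_{i∈Z/mZ} C^{α_i}, v: C^d → V by components v_i, w: V → C^d by components w_i) given by Ẋ = −Σ_{ℓ} Σ_{a=0}^{k-1} Y^a v_ℓ w_{ℓ-k} Y^{k-a-1}, Ẏ = 0, v̇ = −Y^k v, ẇ = w Y^k. This flow preserves the moment map relation YX − XY − Σ_i v_i w_i = Σ_i λ_i e_i. -/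
/-- The Hamiltonian flow
`Ẋ = −∑_ℓ ∑_{a=0}^{k-1} Y^a v_ℓ w_{ℓ-k} Y^{k-a-1}`, `Ẏ = 0`,
`v̇_i = −Y^k v_{i+k}`, `ẇ_i = w_{i-k} Y^k`
on quadruples `(X, Y, v, w)` (realised in `End(V ⊕ ℂ^d)`, modelled by a `ℂ`-algebra `R`,
with `V` graded by `ℤ/m` via projections `e_i`, `X` raising and `Y` lowering the grading by
one, and `v_i = e_i v`, `w_i = w e_i`) preserves the moment map relation
`YX − XY − ∑_i v_i w_i = ∑_i λ_i e_i`: the derivative of its left-hand side along the flow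
vanishes. -/
theorem stmt17 (m : ℕ) [NeZero m] (R : Type*) [Ring R] [Algebra ℂ R]
    (lam : ZMod m → ℂ) (k : ℕ)
    (X Y : R) (e : ZMod m → R) (v w : ZMod m → R)
    (heX : ∀ i : ZMod m, e (i + 1) * X = X * e i)
    (heY : ∀ i : ZMod m, e i * Y = Y * e (i + 1))
    (hev : ∀ i : ZMod m, e i * v i = v i)
    (hwe : ∀ i : ZMod m, w i * e i = w i)
    (hmom : Y * X - X * Y - ∑ i : ZMod m, v i * w i = ∑ i : ZMod m, lam i • e i) :
    let Xdot : R := -∑ l : ZMod m, ∑ a ∈ Finset.range k,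
      Y ^ a * v l * w (l - (k : ZMod m)) * Y ^ (k - a - 1)
    let vdot : ZMod m → R := fun i => -(Y ^ k * v (i + (k : ZMod m)))
    let wdot : ZMod m → R := fun i => w (i - (k : ZMod m)) * Y ^ k
    Y * Xdot - Xdot * Y - ∑ i : ZMod m, (vdot i * w i + v i * wdot i) = 0 := by
  intro Xdot vdot wdot
  have key : ∀ l : ZMod m, ∑ a ∈ Finset.range k,
      (Y * (Y ^ a * v l * w (l - (k : ZMod m)) * Y ^ (k - a - 1))
        - Y ^ a * v l * w (l - (k : ZMod m)) * Y ^ (k - a - 1) * Y)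
      = Y ^ k * (v l * w (l - (k : ZMod m))) - v l * w (l - (k : ZMod m)) * Y ^ k := by
    intro l
    have h := Finset.sum_range_sub
      (fun a => Y ^ a * (v l * w (l - (k : ZMod m))) * Y ^ (k - a)) k
    simp only [pow_zero, Nat.sub_zero, Nat.sub_self, one_mul, mul_one] at h
    rw [← h]
    refine Finset.sum_congr rfl fun a ha => ?_
    have ha' := Finset.mem_range.mp ha
    have h1 : k - a - 1 + 1 = k - a := by omega
    have h2 : k - (a + 1) = k - a - 1 := by omega
    rw [pow_succ', h2, ← h1, pow_succ]
    simp [mul_assoc]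
  have reindex : ∑ i : ZMod m, Y ^ k * v (i + (k : ZMod m)) * w i
      = ∑ l : ZMod m, Y ^ k * (v l * w (l - (k : ZMod m))) := by
    refine Fintype.sum_equiv (Equiv.addRight (k : ZMod m)) _ _ fun i => ?_
    simp [mul_assoc]
  have main : (∑ l : ZMod m, ∑ a ∈ Finset.range k,
        Y * (Y ^ a * v l * w (l - (k : ZMod m)) * Y ^ (k - a - 1)))
      - (∑ l : ZMod m, ∑ a ∈ Finset.range k,
        Y ^ a * v l * w (l - (k : ZMod m)) * Y ^ (k - a - 1) * Y)
      = (∑ l : ZMod m, Y ^ k * (v l * w (l - (k : ZMod m))))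
        - ∑ l : ZMod m, v l * w (l - (k : ZMod m)) * Y ^ k := by
    rw [← Finset.sum_sub_distrib, ← Finset.sum_sub_distrib]
    exact Finset.sum_congr rfl fun l _ => by rw [← Finset.sum_sub_distrib]; exact key l
  have final : ∀ s1 s2 t1 t2 : R, s1 - s2 = t1 - t2 → -s1 + s2 - (-t1 + t2) = 0 := by
    intro s1 s2 t1 t2 h
    calc -s1 + s2 - (-t1 + t2) = -(s1 - s2) + (t1 - t2) := by abel
      _ = -(t1 - t2) + (t1 - t2) := by rw [h]
      _ = 0 := by abel
  show Y * Xdot - Xdot * Y - ∑ i : ZMod m, (vdot i * w i + v i * wdot i) = 0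
  simp only [Xdot, vdot, wdot, mul_neg, neg_mul, sub_neg_eq_add, Finset.mul_sum,
    Finset.sum_mul, Finset.sum_add_distrib, Finset.sum_neg_distrib, reindex,
    ← mul_assoc]
  exact final _ _ _ _ (by simpa only [← mul_assoc] using main)
end
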